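/- Suppose the log-Brunn-Minkowski inequality holds in ℝⁿ: |(1-λ)·K ⊕₀ λ·L| ≥ |K|^{1-λ}|L|^λ for all symmetric convex bodies K, L and λ ∈ [0,1]. Then for p ∈ [0,1], |(1-λ)·K ⊕_p λ·L| ≥ M_{p/n}^λ(|K|, |L|) for all symmetric convex bodies K, L and λ ∈ [0,1]. -/

import Mathlib

open MeasureTheory Real Set

/-- Weighted `p`-mean (`p > 0`) resp. weighted geometric mean (`p = 0`). -/
noncomputable def pmean (p l a b : ℝ) : ℝ :=
  if p = 0 then a ^ (1 - l) * b ^ l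
  else ((1 - l) * a ^ p + l * b ^ p) ^ (1 / p)

/-- Support function of a set. -/
noncomputable def suppFn {n : ℕ} (K : Set (EuclideanSpace ℝ (Fin n)))
    (u : EuclideanSpace ℝ (Fin n)) : ℝ :=
  sSup ((fun x => (inner ℝ x u : ℝ)) '' K)

/-- The `p`-sum `(1-λ)·K ⊕_p λ·L`. -/
noncomputable def psum {n : ℕ} (p l : ℝ) (K L : Set (EuclideanSpace ℝ (Fin n))) :
    Set (EuclideanSpace ℝ (Fin n)) :=
  {x | ∀ u : EuclideanSpace ℝ (Fin n), ‖u‖ = 1 →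
    (inner ℝ x u : ℝ) ≤ pmean p l (suppFn K u) (suppFn L u)}

/-- A symmetric convex body. -/
def IsSymmConvexBody {n : ℕ} (K : Set (EuclideanSpace ℝ (Fin n))) : Prop :=
  IsCompact K ∧ Convex ℝ K ∧ (interior K).Nonempty ∧ K = -K


/-!
Write `K = α • K'`, `L = β • L'` with `|K'| = |L'| = 1`, so `α ^ n = |K|`, `β ^ n = |L|`.
Since `h_{αK'} = α h_{K'}`, the `p`-sum is homogeneous up to a change of weight:
`(1-λ)·K ⊕_p λ·L = M_p^λ(α, β) · ((1-μ)·K' ⊕_p μ·L')` with `(1-λ) α^p : λ β^p = (1-μ) : μ`.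
As `M_0 ≤ M_p` pointwise, the last sum contains `(1-μ)·K' ⊕_0 μ·L'`, of volume at least `1` by
the log-Brunn-Minkowski inequality. Hence `|(1-λ)·K ⊕_p λ·L| ≥ M_p^λ(α, β) ^ n`, and
`M_p^λ(α, β) ^ n = M_{p/n}^λ(|K|, |L|)`.
-/

open Pointwise

section pmean

variable {p l a b s t : ℝ}

lemma one_sub_mul_add_mul_pos (hl : l ∈ Icc (0:ℝ) 1) (ha : 0 < a) (hb : 0 < b) :
    0 < (1 - l) * a + l * b := by
  simpa using convex_Ioi (0:ℝ) ha hb (sub_nonneg.2 hl.2) hl.1 (sub_add_cancel 1 l)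

/-- The weight `μ` with `(1 - l) a ^ p : l b ^ p = (1 - μ) : μ`. -/
noncomputable def pmeanWeight (p l a b : ℝ) : ℝ :=
  l * b ^ p / ((1 - l) * a ^ p + l * b ^ p)

lemma pmeanWeight_mem_Icc (hl : l ∈ Icc (0:ℝ) 1) (ha : 0 < a) (hb : 0 < b) :
    pmeanWeight p l a b ∈ Icc (0:ℝ) 1 := by
  have hS := one_sub_mul_add_mul_pos hl (rpow_pos_of_pos ha p) (rpow_pos_of_pos hb p)
  have hbp : 0 < b ^ p := rpow_pos_of_pos hb p
  refine ⟨div_nonneg (mul_nonneg hl.1 hbp.le) hS.le, ?_⟩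
  rw [pmeanWeight, div_le_one hS]
  nlinarith [mul_nonneg (sub_nonneg.2 hl.2) (rpow_pos_of_pos ha p).le]

lemma pmean_pos (hp : 0 < p) (hl : l ∈ Icc (0:ℝ) 1) (ha : 0 < a) (hb : 0 < b) :
    0 < pmean p l a b := by
  rw [pmean, if_neg hp.ne']
  exact rpow_pos_of_pos
    (one_sub_mul_add_mul_pos hl (rpow_pos_of_pos ha p) (rpow_pos_of_pos hb p)) _

lemma pmean_mul_mul (hp : 0 < p) (hl : l ∈ Icc (0:ℝ) 1) (ha : 0 < a) (hb : 0 < b)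
    (hs : 0 ≤ s) (ht : 0 ≤ t) :
    pmean p l (a * s) (b * t) = pmean p l a b * pmean p (pmeanWeight p l a b) s t := by
  obtain ⟨hμ0, hμ1⟩ := pmeanWeight_mem_Icc (p := p) hl ha hb
  have hS := one_sub_mul_add_mul_pos hl (rpow_pos_of_pos ha p) (rpow_pos_of_pos hb p)
  have hsplit : (1 - l) * (a * s) ^ p + l * (b * t) ^ p = ((1 - l) * a ^ p + l * b ^ p) *
      ((1 - pmeanWeight p l a b) * s ^ p + pmeanWeight p l a b * t ^ p) := by
    rw [mul_rpow ha.le hs, mul_rpow hb.le ht, pmeanWeight]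
    field_simp
    ring
  simp only [pmean, if_neg hp.ne']
  rw [hsplit, mul_rpow hS.le (by nlinarith [rpow_nonneg hs p, rpow_nonneg ht p])]

lemma pmean_zero_le (hp : 0 < p) (hl : l ∈ Icc (0:ℝ) 1) (hs : 0 ≤ s) (ht : 0 ≤ t) :
    pmean 0 l s t ≤ pmean p l s t := by
  obtain ⟨hl0, hl1⟩ := hl
  have hsp := rpow_nonneg hs p
  have htp := rpow_nonneg ht p
  have hgeom : s ^ (1 - l) * t ^ l = ((s ^ p) ^ (1 - l) * (t ^ p) ^ l) ^ (1 / p) := by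
    rw [mul_rpow (by positivity) (by positivity), ← rpow_mul hsp, ← rpow_mul htp,
      ← rpow_mul hs, ← rpow_mul ht]
    congr 2 <;> field_simp
  simp only [pmean, if_neg hp.ne']
  rw [hgeom]
  exact rpow_le_rpow (by positivity)
    (geom_mean_le_arith_mean2_weighted (by linarith) hl0 hsp htp (by ring)) (by positivity)

lemma pmean_le (hp : 0 < p) (hl : l ∈ Icc (0:ℝ) 1) (hs : 0 ≤ s) (ht : 0 ≤ t)
    {M : ℝ} (hsM : s ≤ M) (htM : t ≤ M) : pmean p l s t ≤ M := by
  obtain ⟨hl0, hl1⟩ := hl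
  have hM : 0 ≤ M := hs.trans hsM
  have hsp : s ^ p ≤ M ^ p := rpow_le_rpow hs hsM hp.le
  have htp : t ^ p ≤ M ^ p := rpow_le_rpow ht htM hp.le
  simp only [pmean, if_neg hp.ne']
  calc ((1 - l) * s ^ p + l * t ^ p) ^ (1 / p)
      ≤ ((1 - l) * M ^ p + l * M ^ p) ^ (1 / p) := by
        gcongr
    _ = M := by rw [← add_mul, sub_add_cancel, one_mul, ← rpow_mul hM, mul_one_div_cancel hp.ne',
        rpow_one]

lemma pmean_div {q : ℝ} (hp : 0 < p) (hq : 0 < q) (hl : l ∈ Icc (0:ℝ) 1) (ha : 0 ≤ a)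
    (hb : 0 ≤ b) : pmean (p / q) l a b = pmean p l (a ^ q⁻¹) (b ^ q⁻¹) ^ q := by
  obtain ⟨hl0, hl1⟩ := hl
  simp only [pmean, if_neg hp.ne', if_neg (div_pos hp hq).ne', ← rpow_mul ha, ← rpow_mul hb]
  rw [← rpow_mul (by nlinarith [rpow_nonneg ha (q⁻¹ * p), rpow_nonneg hb (q⁻¹ * p)])]
  congr 1 <;> field_simp

end pmean

section suppFn

variable {n : ℕ} {K L : Set (EuclideanSpace ℝ (Fin n))}

lemma suppFn_smul {c : ℝ} (hc : 0 ≤ c) (K : Set (EuclideanSpace ℝ (Fin n)))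
    (u : EuclideanSpace ℝ (Fin n)) : suppFn (c • K) u = c * suppFn K u := by
  simp only [suppFn, ← Set.image_smul, Set.image_image, real_inner_smul_left]
  rw [← smul_eq_mul, ← Real.sSup_smul_of_nonneg hc, ← Set.image_smul, Set.image_image]
  rfl

lemma le_suppFn (hK : IsCompact K) {x : EuclideanSpace ℝ (Fin n)} (hx : x ∈ K)
    (u : EuclideanSpace ℝ (Fin n)) : inner ℝ x u ≤ suppFn K u :=
  le_csSup (hK.image (continuous_id.inner continuous_const)).bddAbove (mem_image_of_mem _ hx)

lemma suppFn_le (hK : K.Nonempty) {R : ℝ} (hR : K ⊆ Metric.closedBall 0 R)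
    {u : EuclideanSpace ℝ (Fin n)} (hu : ‖u‖ = 1) : suppFn K u ≤ R := by
  refine csSup_le (hK.image _) ?_
  rintro _ ⟨x, hx, rfl⟩
  calc inner ℝ x u ≤ ‖x‖ * ‖u‖ := real_inner_le_norm x u
    _ ≤ R := by simpa [hu] using hR hx

lemma psum_zero_subset {p l : ℝ} (hp : 0 < p) (hl : l ∈ Icc (0:ℝ) 1)
    (hK : ∀ u, 0 ≤ suppFn K u) (hL : ∀ u, 0 ≤ suppFn L u) : psum 0 l K L ⊆ psum p l K L :=
  fun _ hx u hu => (hx u hu).trans (pmean_zero_le hp hl (hK u) (hL u))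

lemma psum_subset_closedBall {p l R : ℝ} (hp : 0 < p) (hl : l ∈ Icc (0:ℝ) 1)
    (hK : K.Nonempty) (hL : L.Nonempty) (hK0 : ∀ u, 0 ≤ suppFn K u) (hL0 : ∀ u, 0 ≤ suppFn L u)
    (hKR : K ⊆ Metric.closedBall 0 R) (hLR : L ⊆ Metric.closedBall 0 R) :
    psum p l K L ⊆ Metric.closedBall 0 R := by
  intro x hx
  rw [mem_closedBall_zero_iff]
  rcases eq_or_ne x 0 with rfl | hx0
  · simpa using Metric.nonempty_closedBall.1 (hK.mono hKR)
  have hu : ‖(‖x‖⁻¹ : ℝ) • x‖ = 1 := norm_smul_inv_norm hx0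
  calc ‖x‖ = inner ℝ x ((‖x‖⁻¹ : ℝ) • x) := by
        rw [real_inner_smul_right, real_inner_self_eq_norm_mul_norm,
          inv_mul_cancel_left₀ (norm_ne_zero_iff.2 hx0)]
    _ ≤ _ := hx _ hu
    _ ≤ R := pmean_le hp hl (hK0 _) (hL0 _) (suppFn_le hK hKR hu) (suppFn_le hL hLR hu)

lemma psum_smul_smul {p l α β : ℝ} (hp : 0 < p) (hl : l ∈ Icc (0:ℝ) 1) (hα : 0 < α)
    (hβ : 0 < β) (hK : ∀ u, 0 ≤ suppFn K u) (hL : ∀ u, 0 ≤ suppFn L u) :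
    psum p l (α • K) (β • L) = pmean p l α β • psum p (pmeanWeight p l α β) K L := by
  ext x
  rw [mem_smul_set_iff_inv_smul_mem₀ (pmean_pos hp hl hα hβ).ne']
  simp only [psum, mem_ofPred_eq, suppFn_smul hα.le, suppFn_smul hβ.le,
    pmean_mul_mul hp hl hα hβ (hK _) (hL _), real_inner_smul_left,
    inv_mul_le_iff₀ (pmean_pos hp hl hα hβ)]

end suppFn

lemma toReal_volume_smul {n : ℕ} (c : ℝ) (s : Set (EuclideanSpace ℝ (Fin n))) :
    (volume (c • s)).toReal = |c| ^ n * (volume s).toReal := by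
  rw [Measure.addHaar_smul, finrank_euclideanSpace_fin, ENNReal.toReal_mul,
    ENNReal.toReal_ofReal (by positivity), abs_pow]

namespace IsSymmConvexBody

variable {n : ℕ} {K L : Set (EuclideanSpace ℝ (Fin n))}

lemma zero_mem (hK : IsSymmConvexBody K) : (0 : EuclideanSpace ℝ (Fin n)) ∈ K := by
  obtain ⟨x, hx⟩ := hK.2.2.1
  have hxK : x ∈ K := interior_subset hx
  have hmx : -x ∈ K := by rw [hK.2.2.2]; exact neg_mem_neg.2 hxK
  simpa using hK.2.1 hxK hmx (by norm_num : (0:ℝ) ≤ 1 / 2) (by norm_num : (0:ℝ) ≤ 1 / 2)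
    (by norm_num)

lemma suppFn_nonneg (hK : IsSymmConvexBody K) (u : EuclideanSpace ℝ (Fin n)) :
    0 ≤ suppFn K u := by
  simpa using le_suppFn hK.1 hK.zero_mem u

lemma smul (hK : IsSymmConvexBody K) {c : ℝ} (hc : c ≠ 0) : IsSymmConvexBody (c • K) :=
  ⟨hK.1.smul c, hK.2.1.smul c, by rw [interior_smul₀ hc]; exact hK.2.2.1.smul_set,
    by rw [← smul_set_neg, ← hK.2.2.2]⟩

lemma toReal_volume_pos (hK : IsSymmConvexBody K) : 0 < (volume K).toReal :=
  ENNReal.toReal_pos ((isOpen_interior.measure_pos volume hK.2.2.1).trans_le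
    (measure_mono interior_subset)).ne' hK.1.measure_lt_top.ne

lemma volume_psum_ne_top {p l : ℝ} (hp : 0 < p) (hl : l ∈ Icc (0:ℝ) 1)
    (hK : IsSymmConvexBody K) (hL : IsSymmConvexBody L) : volume (psum p l K L) ≠ ⊤ := by
  obtain ⟨R, hKR, hLR⟩ : ∃ R, K ⊆ Metric.closedBall 0 R ∧ L ⊆ Metric.closedBall 0 R :=
    (hK.1.isBounded.union hL.1.isBounded).subset_closedBall 0 |>.imp
      fun _ h => ⟨subset_union_left.trans h, subset_union_right.trans h⟩
  exact (measure_mono (psum_subset_closedBall hp hl ⟨0, hK.zero_mem⟩ ⟨0, hL.zero_mem⟩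
    hK.suppFn_nonneg hL.suppFn_nonneg hKR hLR)).trans_lt measure_closedBall_lt_top |>.ne

lemma exists_unit_volume_smul_eq (hn : 0 < n) (hK : IsSymmConvexBody K) :
    ∃ K', IsSymmConvexBody K' ∧ (volume K').toReal = 1 ∧
      K = (volume K).toReal ^ (n : ℝ)⁻¹ • K' := by
  have ha := hK.toReal_volume_pos
  have hα : 0 < (volume K).toReal ^ (n : ℝ)⁻¹ := rpow_pos_of_pos ha _
  refine ⟨((volume K).toReal ^ (n : ℝ)⁻¹)⁻¹ • K, hK.smul (inv_ne_zero hα.ne'), ?_,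
    (smul_inv_smul₀ hα.ne' K).symm⟩
  rw [toReal_volume_smul, abs_of_pos (inv_pos.2 hα), inv_pow, ← rpow_natCast,
    ← rpow_mul ha.le, inv_mul_cancel₀ (Nat.cast_pos.2 hn).ne', rpow_one, inv_mul_cancel₀ ha.ne']

end IsSymmConvexBody

/-- The log-Brunn-Minkowski inequality implies the `p`-Brunn-Minkowski inequality
for `p ∈ [0,1]`. -/
theorem logBM_implies_pBM
    (n : ℕ) (hn : 0 < n)
    (hlog : ∀ K L : Set (EuclideanSpace ℝ (Fin n)), IsSymmConvexBody K → IsSymmConvexBody L →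
      ∀ l ∈ Icc (0:ℝ) 1,
        (volume (psum 0 l K L)).toReal ≥ (volume K).toReal ^ (1 - l) * (volume L).toReal ^ l)
    (p : ℝ) (hp : p ∈ Icc (0:ℝ) 1)
    (K L : Set (EuclideanSpace ℝ (Fin n)))
    (hK : IsSymmConvexBody K) (hL : IsSymmConvexBody L)
    (l : ℝ) (hl : l ∈ Icc (0:ℝ) 1) :
    (volume (psum p l K L)).toReal ≥
      pmean (p / n) l (volume K).toReal (volume L).toReal := by
  rcases hp.1.eq_or_lt with rfl | hp_pos
  · simpa [pmean] using hlog K L hK hL l hl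
  obtain ⟨K', hK', hK'1, hKK'⟩ := hK.exists_unit_volume_smul_eq hn
  obtain ⟨L', hL', hL'1, hLL'⟩ := hL.exists_unit_volume_smul_eq hn
  set α := (volume K).toReal ^ (n : ℝ)⁻¹
  set β := (volume L).toReal ^ (n : ℝ)⁻¹
  have hα : 0 < α := rpow_pos_of_pos hK.toReal_volume_pos _
  have hβ : 0 < β := rpow_pos_of_pos hL.toReal_volume_pos _
  set μ := pmeanWeight p l α β
  have hμ : μ ∈ Icc (0:ℝ) 1 := pmeanWeight_mem_Icc hl hα hβ
  have hBM : 1 ≤ (volume (psum p μ K' L')).toReal :=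
    calc (1:ℝ) ≤ (volume (psum 0 μ K' L')).toReal := by
          simpa [hK'1, hL'1] using hlog K' L' hK' hL' μ hμ
      _ ≤ (volume (psum p μ K' L')).toReal :=
          ENNReal.toReal_mono (hK'.volume_psum_ne_top hp_pos hμ hL') (measure_mono
            (psum_zero_subset hp_pos hμ hK'.suppFn_nonneg hL'.suppFn_nonneg))
  have hscale : psum p l K L = pmean p l α β • psum p μ K' L' := by
    rw [← psum_smul_smul hp_pos hl hα hβ hK'.suppFn_nonneg hL'.suppFn_nonneg, ← hKK', ← hLL']
  have hc : 0 < pmean p l α β := pmean_pos hp_pos hl hα hβ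
  rw [hscale, toReal_volume_smul, abs_of_pos hc,
    pmean_div hp_pos (Nat.cast_pos.2 hn) hl hK.toReal_volume_pos.le hL.toReal_volume_pos.le,
    rpow_natCast]
  exact le_mul_of_one_le_right (pow_pos hc n).le hBM
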